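/- Let i, j ≥ 1 be integers and let S_n^{(L)}, S_n^{(M)}, S_n^{(R)} be three independent simple symmetric random walks started from −2i, 0, 2j built from independent i.i.d. Rademacher sequences, with distances D_n^{(L,M)} = S_n^{(M)} − S_n^{(L)}, D_n^{(M,R)} = S_n^{(R)} − S_n^{(M)}, and natural filtration F_n = σ(I_k^{(L)}, I_k^{(M)}, I_k^{(R)} : k ≤ n). Then the process (D_n^{(L,M)} D_n^{(M,R)} (D_n^{(L,M)} + D_n^{(M,R)}))_{n≥0} is a martingale with respect to (F_n)_{n≥0}. -/

import Mathlib

open MeasureTheory ProbabilityTheory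
open scoped ENNReal

section AuxRad

variable {Ω : Type*} [MeasurableSpace Ω] {μ : Measure Ω} [IsProbabilityMeasure μ]

lemma rad_ae' {f : Ω → ℝ} (hm : Measurable f) (h1 : μ {ω | f ω = 1} = 1 / 2)
    (h2 : μ {ω | f ω = -1} = 1 / 2) : ∀ᵐ ω ∂μ, f ω = 1 ∨ f ω = -1 := by
  have hA : MeasurableSet {ω | f ω = 1} := hm (measurableSet_singleton 1)
  have hB : MeasurableSet {ω | f ω = -1} := hm (measurableSet_singleton (-1))
  have hdisj : Disjoint {ω | f ω = 1} {ω | f ω = -1} := by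
    rw [Set.disjoint_left]
    rintro ω (hω1 : f ω = 1) (hω2 : f ω = -1)
    rw [hω1] at hω2; norm_num at hω2
  have hu : μ ({ω | f ω = 1} ∪ {ω | f ω = -1}) = 1 := by
    rw [measure_union hdisj hB, h1, h2]
    rw [ENNReal.div_add_div_same, one_add_one_eq_two]
    exact ENNReal.div_self two_ne_zero ENNReal.ofNat_ne_top
  have hc : μ ({ω | f ω = 1} ∪ {ω | f ω = -1})ᶜ = 0 := by
    rw [measure_compl (hA.union hB) (measure_ne_top μ _), hu, measure_univ, tsub_self]
  rw [ae_iff]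
  convert hc using 2
  try simp [Set.ext_iff, not_or]


end AuxRad

lemma integrable_of_ae_bound {Ω : Type*} {m : MeasurableSpace Ω} {μ : MeasureTheory.Measure Ω}
    [IsFiniteMeasure μ] {f : Ω → ℝ} (hf : AEStronglyMeasurable f μ) {C : ℝ}
    (h : ∀ᵐ ω ∂μ, |f ω| ≤ C) : Integrable f μ :=
  Integrable.mono' (integrable_const C) hf (by simpa [Real.norm_eq_abs] using h)

section AuxRad2
variable {Ω : Type*} [MeasurableSpace Ω] {μ : MeasureTheory.Measure Ω} [IsProbabilityMeasure μ]

lemma integral_rad {f : Ω → ℝ} (hm : Measurable f) (h1 : μ {ω | f ω = 1} = 1 / 2)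
    (h2 : μ {ω | f ω = -1} = 1 / 2) : ∫ ω, f ω ∂μ = 0 := by
  have hA : MeasurableSet {ω | f ω = 1} := hm (measurableSet_singleton 1)
  have hB : MeasurableSet {ω | f ω = -1} := hm (measurableSet_singleton (-1))
  have hae := rad_ae' hm h1 h2
  have heq : f =ᵐ[μ] fun ω => Set.indicator {ω | f ω = 1} (fun _ => (1 : ℝ)) ω
      + Set.indicator {ω | f ω = -1} (fun _ => (-1 : ℝ)) ω := by
    filter_upwards [hae] with ω hω
    rcases hω with h | h <;>
      simp [Set.indicator_apply, Set.mem_setOf_eq, h] <;> norm_num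
  rw [integral_congr_ae heq, integral_add
    ((integrable_const (1 : ℝ)).indicator hA) ((integrable_const (-1 : ℝ)).indicator hB),
    integral_indicator_const _ hA, integral_indicator_const _ hB, measureReal_def, measureReal_def, h1, h2]
  norm_num [ENNReal.toReal_div]

lemma abs_mul_le' {x y Cx Cy : ℝ} (hx : |x| ≤ Cx) (hy : |y| ≤ Cy) : |x * y| ≤ Cx * Cy := by
  rw [abs_mul]; exact mul_le_mul hx hy (abs_nonneg _) ((abs_nonneg _).trans hx)

lemma abs_sum_range_le {f : ℕ → Ω → ℝ} (n : ℕ) (ω : Ω) (h : ∀ k, k < n → |f k ω| ≤ 1) :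
    |∑ k ∈ Finset.range n, f k ω| ≤ (n : ℝ) := by
  calc |∑ k ∈ Finset.range n, f k ω| ≤ ∑ k ∈ Finset.range n, |f k ω| :=
        Finset.abs_sum_le_sum_abs _ _
    _ ≤ ∑ _k ∈ Finset.range n, (1 : ℝ) :=
        Finset.sum_le_sum fun k hk => h k (Finset.mem_range.mp hk)
    _ = n := by simp

/-- pull-out + independence: conditional expectation of a product. -/
lemma condexp_mul_indep_eq {m₁ m₂ m0 : MeasurableSpace Ω} {μ : Measure Ω}
    [IsProbabilityMeasure μ] (hle₁ : m₁ ≤ m0) (hle₂ : m₂ ≤ m0) (hindp : Indep m₁ m₂ μ)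
    {h g : Ω → ℝ} (hh : StronglyMeasurable[m₂] h) (hg : StronglyMeasurable[m₁] g)
    (hint_hg : Integrable (fun ω => h ω * g ω) μ) (hint_g : Integrable g μ) :
    μ[fun ω => h ω * g ω|m₂] =ᵐ[μ] fun ω => h ω * ∫ x, g x ∂μ := by
  have h1 : μ[fun ω => h ω * g ω|m₂] =ᵐ[μ] h * μ[g|m₂] :=
    condExp_mul_of_stronglyMeasurable_left hh hint_hg hint_g
  have h2 : μ[g|m₂] =ᵐ[μ] fun _ => ∫ x, g x ∂μ :=
    condExp_indep_eq hle₁ hle₂ hg hindp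
  filter_upwards [h1, h2] with ω hω1 hω2
  rw [hω1, Pi.mul_apply, hω2]

end AuxRad2

lemma cubic_step (u v a b : ℝ) :
    (u + a) * (v + b) * ((u + a) + (v + b)) =
      u * v * (u + v) +
        ((2*(u*v) + v*v) * a +
          ((u*u + 2*(u*v)) * b +
            ((2*u + 2*v) * (a*b) +
              (v * (a*a) +
                (u * (b*b) +
                  (a*a*b +
                    a*(b*b))))))) := by ring

section Step

variable {Ω : Type*}

lemma condexp_add' {m : MeasurableSpace Ω} [m0 : MeasurableSpace Ω] {μ : Measure Ω}
    [IsProbabilityMeasure μ] {f g : Ω → ℝ} (hf : Integrable f μ)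
    (hg : Integrable g μ) :
    μ[fun ω => f ω + g ω|m] =ᵐ[μ] fun ω => (μ[f|m]) ω + (μ[g|m]) ω :=
  condExp_add hf hg _

lemma step_condexp {m₁ m₂ : MeasurableSpace Ω} [m0 : MeasurableSpace Ω] {μ : Measure Ω}
    [IsProbabilityMeasure μ] (hle₁ : m₁ ≤ m0) (hle₂ : m₂ ≤ m0)
    (hindp : Indep m₁ m₂ μ) {u v a b : Ω → ℝ} {P Q : ℝ}
    (hu2 : StronglyMeasurable[m₂] u) (hv2 : StronglyMeasurable[m₂] v)
    (ha1 : Measurable[m₁] a) (hb1 : Measurable[m₁] b)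
    (hum : Measurable u) (hvm : Measurable v) (ham : Measurable a) (hbm : Measurable b)
    (hubd : ∀ᵐ ω ∂μ, |u ω| ≤ P) (hvbd : ∀ᵐ ω ∂μ, |v ω| ≤ Q)
    (habd : ∀ᵐ ω ∂μ, |a ω| ≤ 2) (hbbd : ∀ᵐ ω ∂μ, |b ω| ≤ 2)
    (hEa : ∫ ω, a ω ∂μ = 0) (hEb : ∫ ω, b ω ∂μ = 0)
    (hEab : ∫ ω, a ω * b ω ∂μ = -1)
    (hEaa : ∫ ω, a ω * a ω ∂μ = 2) (hEbb : ∫ ω, b ω * b ω ∂μ = 2)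
    (hEaab : ∫ ω, a ω * a ω * b ω ∂μ = 0) (hEabb : ∫ ω, a ω * (b ω * b ω) ∂μ = 0) :
    μ[fun ω => (u ω + a ω) * (v ω + b ω) * ((u ω + a ω) + (v ω + b ω))|m₂]
      =ᵐ[μ] fun ω => u ω * v ω * (u ω + v ω) := by
  -- integrability facts
  have hFint : Integrable (fun ω => u ω * v ω * (u ω + v ω)) μ := by
    refine integrable_of_ae_bound (C := P*Q*(P+Q)) (((hum.mul hvm).mul (hum.add hvm)).aestronglyMeasurable) ?_
    filter_upwards [hubd, hvbd] with ω hu hv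
    exact abs_mul_le' (abs_mul_le' hu hv) ((abs_add_le _ _).trans (add_le_add hu hv))
  have ht1 : Integrable (fun ω => (2*(u ω*v ω) + v ω*v ω) * a ω) μ := by
    refine integrable_of_ae_bound
      (C := (2*(P*Q) + Q*Q)*2)
      ((((measurable_const.mul (hum.mul hvm)).add (hvm.mul hvm)).mul ham).aestronglyMeasurable) ?_
    filter_upwards [hubd, hvbd, habd] with ω hu hv ha
    exact abs_mul_le' ((abs_add_le _ _).trans (add_le_add
      (abs_mul_le' (by norm_num : |(2:ℝ)| ≤ 2) (abs_mul_le' hu hv)) (abs_mul_le' hv hv))) ha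
  have ht2 : Integrable (fun ω => (u ω*u ω + 2*(u ω*v ω)) * b ω) μ := by
    refine integrable_of_ae_bound
      (C := (P*P + 2*(P*Q))*2)
      ((((hum.mul hum).add (measurable_const.mul (hum.mul hvm))).mul hbm).aestronglyMeasurable) ?_
    filter_upwards [hubd, hvbd, hbbd] with ω hu hv hb
    exact abs_mul_le' ((abs_add_le _ _).trans (add_le_add (abs_mul_le' hu hu)
      (abs_mul_le' (by norm_num : |(2:ℝ)| ≤ 2) (abs_mul_le' hu hv)))) hb
  have ht3 : Integrable (fun ω => (2*u ω + 2*v ω) * (a ω*b ω)) μ := by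
    refine integrable_of_ae_bound
      (C := (2*P + 2*Q)*(2*2))
      ((((measurable_const.mul hum).add (measurable_const.mul hvm)).mul
        (ham.mul hbm)).aestronglyMeasurable) ?_
    filter_upwards [hubd, hvbd, habd, hbbd] with ω hu hv ha hb
    exact abs_mul_le' ((abs_add_le _ _).trans (add_le_add
      (abs_mul_le' (by norm_num : |(2:ℝ)| ≤ 2) hu)
      (abs_mul_le' (by norm_num : |(2:ℝ)| ≤ 2) hv))) (abs_mul_le' ha hb)
  have ht4 : Integrable (fun ω => v ω * (a ω*a ω)) μ := by
    refine integrable_of_ae_bound (C := Q*(2*2)) ((hvm.mul (ham.mul ham)).aestronglyMeasurable) ?_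
    filter_upwards [hvbd, habd] with ω hv ha
    exact abs_mul_le' hv (abs_mul_le' ha ha)
  have ht5 : Integrable (fun ω => u ω * (b ω*b ω)) μ := by
    refine integrable_of_ae_bound (C := P*(2*2)) ((hum.mul (hbm.mul hbm)).aestronglyMeasurable) ?_
    filter_upwards [hubd, hbbd] with ω hu hb
    exact abs_mul_le' hu (abs_mul_le' hb hb)
  have ht6 : Integrable (fun ω => a ω*a ω*b ω) μ := by
    refine integrable_of_ae_bound (C := 2*2*2) (((ham.mul ham).mul hbm).aestronglyMeasurable) ?_
    filter_upwards [habd, hbbd] with ω ha hb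
    exact abs_mul_le' (abs_mul_le' ha ha) hb
  have ht7 : Integrable (fun ω => a ω*(b ω*b ω)) μ := by
    refine integrable_of_ae_bound (C := 2*(2*2)) ((ham.mul (hbm.mul hbm)).aestronglyMeasurable) ?_
    filter_upwards [habd, hbbd] with ω ha hb
    exact abs_mul_le' ha (abs_mul_le' hb hb)
  have hga : Integrable a μ := integrable_of_ae_bound ham.aestronglyMeasurable habd
  have hgb : Integrable b μ := integrable_of_ae_bound hbm.aestronglyMeasurable hbbd
  have hgab : Integrable (fun ω => a ω * b ω) μ := by
    refine integrable_of_ae_bound (C := 2*2) ((ham.mul hbm).aestronglyMeasurable) ?_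
    filter_upwards [habd, hbbd] with ω ha hb
    exact abs_mul_le' ha hb
  have hgaa : Integrable (fun ω => a ω * a ω) μ := by
    refine integrable_of_ae_bound (C := 2*2) ((ham.mul ham).aestronglyMeasurable) ?_
    filter_upwards [habd] with ω ha
    exact abs_mul_le' ha ha
  have hgbb : Integrable (fun ω => b ω * b ω) μ := by
    refine integrable_of_ae_bound (C := 2*2) ((hbm.mul hbm).aestronglyMeasurable) ?_
    filter_upwards [hbbd] with ω hb
    exact abs_mul_le' hb hb
  -- conditional expectations of the seven terms
  have E1 : μ[fun ω => (2*(u ω*v ω) + v ω*v ω) * a ω|m₂]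
      =ᵐ[μ] fun ω => (2*(u ω*v ω) + v ω*v ω) * (0:ℝ) := by
    have := condexp_mul_indep_eq (μ := μ) hle₁ hle₂ hindp
      ((stronglyMeasurable_const.mul (hu2.mul hv2)).add (hv2.mul hv2))
      ha1.stronglyMeasurable ht1 hga
    rwa [hEa] at this
  have E2 : μ[fun ω => (u ω*u ω + 2*(u ω*v ω)) * b ω|m₂]
      =ᵐ[μ] fun ω => (u ω*u ω + 2*(u ω*v ω)) * (0:ℝ) := by
    have := condexp_mul_indep_eq (μ := μ) hle₁ hle₂ hindp
      ((hu2.mul hu2).add (stronglyMeasurable_const.mul (hu2.mul hv2)))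
      hb1.stronglyMeasurable ht2 hgb
    rwa [hEb] at this
  have E3 : μ[fun ω => (2*u ω + 2*v ω) * (a ω*b ω)|m₂]
      =ᵐ[μ] fun ω => (2*u ω + 2*v ω) * (-1:ℝ) := by
    have := condexp_mul_indep_eq (μ := μ) hle₁ hle₂ hindp
      ((stronglyMeasurable_const.mul hu2).add (stronglyMeasurable_const.mul hv2))
      (ha1.mul hb1).stronglyMeasurable ht3 hgab
    simp only [Pi.mul_apply, Pi.add_apply] at this
    rwa [hEab] at this
  have E4 : μ[fun ω => v ω * (a ω*a ω)|m₂] =ᵐ[μ] fun ω => v ω * (2:ℝ) := by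
    have := condexp_mul_indep_eq (μ := μ) hle₁ hle₂ hindp hv2
      (ha1.mul ha1).stronglyMeasurable ht4 hgaa
    simp only [Pi.mul_apply, Pi.add_apply] at this
    rwa [hEaa] at this
  have E5 : μ[fun ω => u ω * (b ω*b ω)|m₂] =ᵐ[μ] fun ω => u ω * (2:ℝ) := by
    have := condexp_mul_indep_eq (μ := μ) hle₁ hle₂ hindp hu2
      (hb1.mul hb1).stronglyMeasurable ht5 hgbb
    simp only [Pi.mul_apply, Pi.add_apply] at this
    rwa [hEbb] at this
  have E6 : μ[fun ω => a ω*a ω*b ω|m₂] =ᵐ[μ] fun _ => (0:ℝ) := by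
    have := condExp_indep_eq (μ := μ) hle₁ hle₂
      ((ha1.mul ha1).mul hb1).stronglyMeasurable hindp
    simp only [Pi.mul_apply, Pi.add_apply] at this
    rwa [hEaab] at this
  have E7 : μ[fun ω => a ω*(b ω*b ω)|m₂] =ᵐ[μ] fun _ => (0:ℝ) := by
    have := condExp_indep_eq (μ := μ) hle₁ hle₂
      (ha1.mul (hb1.mul hb1)).stronglyMeasurable hindp
    simp only [Pi.mul_apply, Pi.add_apply] at this
    rwa [hEabb] at this
  -- assemble
  have key : (fun ω => (u ω + a ω) * (v ω + b ω) * ((u ω + a ω) + (v ω + b ω)))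
      = fun ω => u ω * v ω * (u ω + v ω) +
          ((2*(u ω*v ω) + v ω*v ω) * a ω +
            ((u ω*u ω + 2*(u ω*v ω)) * b ω +
              ((2*u ω + 2*v ω) * (a ω*b ω) +
                (v ω * (a ω*a ω) +
                  (u ω * (b ω*b ω) +
                    (a ω*a ω*b ω +
                      a ω*(b ω*b ω))))))) := by
    funext ω; exact cubic_step (u ω) (v ω) (a ω) (b ω)
  have hFn : μ[fun ω => u ω * v ω * (u ω + v ω)|m₂] = fun ω => u ω * v ω * (u ω + v ω) :=
    condExp_of_stronglyMeasurable hle₂ ((hu2.mul hv2).mul (hu2.add hv2)) hFint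
  have C6 : μ[fun ω => a ω*a ω*b ω + a ω*(b ω*b ω)|m₂] =ᵐ[μ]
      fun ω => (μ[fun ω => a ω*a ω*b ω|m₂]) ω + (μ[fun ω => a ω*(b ω*b ω)|m₂]) ω :=
    condExp_add ht6 ht7 _
  have C5 : μ[fun ω => u ω*(b ω*b ω) + (a ω*a ω*b ω + a ω*(b ω*b ω))|m₂] =ᵐ[μ]
      fun ω => (μ[fun ω => u ω*(b ω*b ω)|m₂]) ω
        + (μ[fun ω => a ω*a ω*b ω + a ω*(b ω*b ω)|m₂]) ω :=
    condExp_add ht5 (ht6.add ht7) _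
  have C4 : μ[fun ω => v ω*(a ω*a ω) + (u ω*(b ω*b ω) + (a ω*a ω*b ω + a ω*(b ω*b ω)))|m₂] =ᵐ[μ]
      fun ω => (μ[fun ω => v ω*(a ω*a ω)|m₂]) ω
        + (μ[fun ω => u ω*(b ω*b ω) + (a ω*a ω*b ω + a ω*(b ω*b ω))|m₂]) ω :=
    condExp_add ht4 (ht5.add (ht6.add ht7)) _
  have C3 : μ[fun ω => (2*u ω + 2*v ω)*(a ω*b ω)
      + (v ω*(a ω*a ω) + (u ω*(b ω*b ω) + (a ω*a ω*b ω + a ω*(b ω*b ω))))|m₂] =ᵐ[μ]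
      fun ω => (μ[fun ω => (2*u ω + 2*v ω)*(a ω*b ω)|m₂]) ω
        + (μ[fun ω => v ω*(a ω*a ω) + (u ω*(b ω*b ω) + (a ω*a ω*b ω + a ω*(b ω*b ω)))|m₂]) ω :=
    condExp_add ht3 (ht4.add (ht5.add (ht6.add ht7))) _
  have C2 : μ[fun ω => (u ω*u ω + 2*(u ω*v ω))*b ω + ((2*u ω + 2*v ω)*(a ω*b ω)
      + (v ω*(a ω*a ω) + (u ω*(b ω*b ω) + (a ω*a ω*b ω + a ω*(b ω*b ω)))))|m₂] =ᵐ[μ]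
      fun ω => (μ[fun ω => (u ω*u ω + 2*(u ω*v ω))*b ω|m₂]) ω
        + (μ[fun ω => (2*u ω + 2*v ω)*(a ω*b ω)
          + (v ω*(a ω*a ω) + (u ω*(b ω*b ω) + (a ω*a ω*b ω + a ω*(b ω*b ω))))|m₂]) ω :=
    condExp_add ht2 (ht3.add (ht4.add (ht5.add (ht6.add ht7)))) _
  have C1 : μ[fun ω => (2*(u ω*v ω) + v ω*v ω)*a ω + ((u ω*u ω + 2*(u ω*v ω))*b ω
      + ((2*u ω + 2*v ω)*(a ω*b ω)
      + (v ω*(a ω*a ω) + (u ω*(b ω*b ω) + (a ω*a ω*b ω + a ω*(b ω*b ω))))))|m₂] =ᵐ[μ]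
      fun ω => (μ[fun ω => (2*(u ω*v ω) + v ω*v ω)*a ω|m₂]) ω
        + (μ[fun ω => (u ω*u ω + 2*(u ω*v ω))*b ω + ((2*u ω + 2*v ω)*(a ω*b ω)
          + (v ω*(a ω*a ω) + (u ω*(b ω*b ω) + (a ω*a ω*b ω + a ω*(b ω*b ω)))))|m₂]) ω :=
    condExp_add ht1 (ht2.add (ht3.add (ht4.add (ht5.add (ht6.add ht7))))) _
  have C0 : μ[fun ω => u ω * v ω * (u ω + v ω)
      + ((2*(u ω*v ω) + v ω*v ω) * a ω
        + ((u ω*u ω + 2*(u ω*v ω)) * b ω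
          + ((2*u ω + 2*v ω) * (a ω*b ω)
            + (v ω * (a ω*a ω)
              + (u ω * (b ω*b ω)
                + (a ω*a ω*b ω
                  + a ω*(b ω*b ω)))))))|m₂] =ᵐ[μ]
      fun ω => (μ[fun ω => u ω * v ω * (u ω + v ω)|m₂]) ω
        + (μ[fun ω => (2*(u ω*v ω) + v ω*v ω)*a ω + ((u ω*u ω + 2*(u ω*v ω))*b ω
          + ((2*u ω + 2*v ω)*(a ω*b ω)
          + (v ω*(a ω*a ω) + (u ω*(b ω*b ω) + (a ω*a ω*b ω + a ω*(b ω*b ω))))))|m₂]) ω :=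
    condExp_add hFint (ht1.add (ht2.add (ht3.add (ht4.add (ht5.add (ht6.add ht7)))))) _
  rw [key]
  filter_upwards [C0, C1, C2, C3, C4, C5, C6, E1, E2, E3, E4, E5, E6, E7] with ω c0 c1 c2 c3
    c4 c5 c6 e1 e2 e3 e4 e5 e6 e7
  simp only [c0, c1, c2, c3, c4, c5, c6, e1, e2, e3, e4, e5, e6, e7, hFn]
  ring

end Step

/-- Distance `D_n^{(L,M)} = S_n^{(M)} - S_n^{(L)}` between the middle walk
(started at `0`) and the left walk (started at `-2i`). -/
noncomputable def distLM {Ω : Type*} (i : ℕ) (IL IM : ℕ → Ω → ℝ) (n : ℕ) (ω : Ω) : ℝ :=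
  (∑ k ∈ Finset.range n, IM k ω) - (-(2 * (i : ℝ)) + ∑ k ∈ Finset.range n, IL k ω)

/-- Distance `D_n^{(M,R)} = S_n^{(R)} - S_n^{(M)}` between the right walk
(started at `2j`) and the middle walk (started at `0`). -/
noncomputable def distMR {Ω : Type*} (j : ℕ) (IM IR : ℕ → Ω → ℝ) (n : ℕ) (ω : Ω) : ℝ :=
  (2 * (j : ℝ) + ∑ k ∈ Finset.range n, IR k ω) - (∑ k ∈ Finset.range n, IM k ω)

/-- The natural filtration `F_n = σ(I_k^{(L)}, I_k^{(M)}, I_k^{(R)} : k ≤ n)`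
generated by the three increment sequences (with `F_0` trivial; the `k`-th
increment `I_k` is `I a (k-1)`). -/
def incFiltration {Ω : Type*} [m : MeasurableSpace Ω] (I : Fin 3 → ℕ → Ω → ℝ)
    (hmeas : ∀ a k, Measurable (I a k)) : Filtration ℕ m where
  seq n := ⨆ (a : Fin 3) (k : ℕ) (_ : k < n), MeasurableSpace.comap (I a k) inferInstance
  mono' := by
    intro p q hpq
    refine iSup_mono fun a => iSup_mono fun k => ?_
    exact iSup_le fun hk =>
      le_iSup (fun _ : k < q => MeasurableSpace.comap (I a k) inferInstance) (lt_of_lt_of_le hk hpq)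
  le' n := iSup_le fun a => iSup_le fun k => iSup_le fun _ => (hmeas a k).comap_le


/-- **Proposition 3.6.**  For three independent simple symmetric random walks
started from `-2i`, `0`, `2j` built from independent i.i.d. Rademacher
sequences, the process `(D_n^{(L,M)} D_n^{(M,R)} (D_n^{(L,M)} + D_n^{(M,R)}))`
is a martingale with respect to the natural filtration of the increments. -/
theorem product_times_sum_martingale
    {Ω : Type*} [MeasurableSpace Ω] {μ : Measure Ω} [IsProbabilityMeasure μ]
    (I : Fin 3 → ℕ → Ω → ℝ)
    (hmeas : ∀ a k, Measurable (I a k))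
    (hindep : iIndepFun (fun (p : Fin 3 × ℕ) ω => I p.1 p.2 ω) μ)
    (hrad : ∀ a k, μ {ω | I a k ω = 1} = 1 / 2 ∧ μ {ω | I a k ω = -1} = 1 / 2)
    (i j : ℕ) (hi : 1 ≤ i) (hj : 1 ≤ j) :
    Martingale (fun n ω => distLM i (I 0) (I 1) n ω * distMR j (I 1) (I 2) n ω *
        (distLM i (I 0) (I 1) n ω + distMR j (I 1) (I 2) n ω))
      (incFiltration I hmeas) μ := by
  have hIae : ∀ (a : Fin 3) (k : ℕ), ∀ᵐ ω ∂μ, I a k ω = 1 ∨ I a k ω = -1 := fun a k =>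
    rad_ae' (hmeas a k) (hrad a k).1 (hrad a k).2
  have hIbd : ∀ (a : Fin 3) (k : ℕ), ∀ᵐ ω ∂μ, |I a k ω| ≤ 1 := fun a k =>
    (hIae a k).mono (by rintro ω (h | h) <;> rw [h] <;> norm_num)
  have hIint : ∀ (a : Fin 3) (k : ℕ), Integrable (I a k) μ := fun a k =>
    integrable_of_ae_bound (hmeas a k).aestronglyMeasurable (hIbd a k)
  have hEI : ∀ (a : Fin 3) (k : ℕ), ∫ ω, I a k ω ∂μ = 0 := fun a k =>
    integral_rad (hmeas a k) (hrad a k).1 (hrad a k).2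
  have hball : ∀ᵐ ω ∂μ, ∀ (a : Fin 3) (k : ℕ), |I a k ω| ≤ 1 := by
    rw [ae_all_iff]; intro a; rw [ae_all_iff]; intro k; exact hIbd a k
  -- measurability with respect to the filtration
  have hcomap_le : ∀ (a : Fin 3) (k n : ℕ), k < n →
      MeasurableSpace.comap (I a k) inferInstance ≤ incFiltration I hmeas n := by
    intro a k n hk
    have h1 : MeasurableSpace.comap (I a k) inferInstance ≤
        ⨆ (k' : ℕ) (_ : k' < n), MeasurableSpace.comap (I a k') inferInstance :=
      le_iSup₂ (f := fun (k' : ℕ) (_ : k' < n) =>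
        MeasurableSpace.comap (I a k') inferInstance) k hk
    exact h1.trans (le_iSup
      (fun a => ⨆ (k' : ℕ) (_ : k' < n), MeasurableSpace.comap (I a k') inferInstance) a)
  have hImeasF : ∀ (n : ℕ) (a : Fin 3) (k : ℕ), k < n →
      Measurable[incFiltration I hmeas n] (I a k) := fun n a k hk =>
    Measurable.of_comap_le (hcomap_le a k n hk)
  have hXmeasF : ∀ n, Measurable[incFiltration I hmeas n]
      (fun ω => distLM i (I 0) (I 1) n ω) := by
    intro n
    simp only [distLM]
    exact (Finset.measurable_sum _ fun k hk => hImeasF n 1 k (Finset.mem_range.mp hk)).sub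
      (measurable_const.add
        (Finset.measurable_sum _ fun k hk => hImeasF n 0 k (Finset.mem_range.mp hk)))
  have hYmeasF : ∀ n, Measurable[incFiltration I hmeas n]
      (fun ω => distMR j (I 1) (I 2) n ω) := by
    intro n
    simp only [distMR]
    exact (measurable_const.add
      (Finset.measurable_sum _ fun k hk => hImeasF n 2 k (Finset.mem_range.mp hk))).sub
      (Finset.measurable_sum _ fun k hk => hImeasF n 1 k (Finset.mem_range.mp hk))
  have hXm : ∀ n, Measurable (fun ω => distLM i (I 0) (I 1) n ω) := by
    intro n
    simp only [distLM]
    exact (Finset.measurable_sum _ fun k _ => hmeas 1 k).sub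
      (measurable_const.add (Finset.measurable_sum _ fun k _ => hmeas 0 k))
  have hYm : ∀ n, Measurable (fun ω => distMR j (I 1) (I 2) n ω) := by
    intro n
    simp only [distMR]
    exact (measurable_const.add (Finset.measurable_sum _ fun k _ => hmeas 2 k)).sub
      (Finset.measurable_sum _ fun k _ => hmeas 1 k)
  -- a.e. bounds
  have habs_sub : ∀ x y : ℝ, |x| ≤ 1 → |y| ≤ 1 → |x - y| ≤ 2 := by
    intro x y hx hy
    rw [sub_eq_add_neg]
    refine (abs_add_le _ _).trans ?_
    rw [abs_neg]; linarith
  have hXbd : ∀ n, ∀ᵐ ω ∂μ, |distLM i (I 0) (I 1) n ω| ≤ 2*(i:ℝ) + 2*n := by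
    intro n
    filter_upwards [hball] with ω hω
    simp only [distLM]
    have h1 := abs_sum_range_le (f := I 1) n ω fun k _ => hω 1 k
    have h0 := abs_sum_range_le (f := I 0) n ω fun k _ => hω 0 k
    have key : (∑ k ∈ Finset.range n, I 1 k ω) - (-(2*(i:ℝ)) + ∑ k ∈ Finset.range n, I 0 k ω)
        = 2*(i:ℝ) + ((∑ k ∈ Finset.range n, I 1 k ω) - ∑ k ∈ Finset.range n, I 0 k ω) := by
      ring
    rw [key]
    have h2 := abs_add_le (2*(i:ℝ))
      ((∑ k ∈ Finset.range n, I 1 k ω) - ∑ k ∈ Finset.range n, I 0 k ω)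
    have h3 : |(∑ k ∈ Finset.range n, I 1 k ω) - ∑ k ∈ Finset.range n, I 0 k ω|
        ≤ |∑ k ∈ Finset.range n, I 1 k ω| + |∑ k ∈ Finset.range n, I 0 k ω| := by
      rw [sub_eq_add_neg]
      refine (abs_add_le _ _).trans ?_
      rw [abs_neg]
    have h4 : |2*(i:ℝ)| = 2*i := abs_of_nonneg (by positivity)
    linarith
  have hYbd : ∀ n, ∀ᵐ ω ∂μ, |distMR j (I 1) (I 2) n ω| ≤ 2*(j:ℝ) + 2*n := by
    intro n
    filter_upwards [hball] with ω hω
    simp only [distMR]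
    have h1 := abs_sum_range_le (f := I 1) n ω fun k _ => hω 1 k
    have h2 := abs_sum_range_le (f := I 2) n ω fun k _ => hω 2 k
    have key : (2*(j:ℝ) + ∑ k ∈ Finset.range n, I 2 k ω) - (∑ k ∈ Finset.range n, I 1 k ω)
        = 2*(j:ℝ) + ((∑ k ∈ Finset.range n, I 2 k ω) - ∑ k ∈ Finset.range n, I 1 k ω) := by
      ring
    rw [key]
    have h5 := abs_add_le (2*(j:ℝ))
      ((∑ k ∈ Finset.range n, I 2 k ω) - ∑ k ∈ Finset.range n, I 1 k ω)
    have h3 : |(∑ k ∈ Finset.range n, I 2 k ω) - ∑ k ∈ Finset.range n, I 1 k ω|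
        ≤ |∑ k ∈ Finset.range n, I 2 k ω| + |∑ k ∈ Finset.range n, I 1 k ω| := by
      rw [sub_eq_add_neg]
      refine (abs_add_le _ _).trans ?_
      rw [abs_neg]
    have h4 : |2*(j:ℝ)| = 2*j := abs_of_nonneg (by positivity)
    linarith
  -- independence of the new increments from the past
  have hm1meas : ∀ (n : ℕ) (a : Fin 3),
      Measurable[⨆ a : Fin 3, MeasurableSpace.comap (I a n) inferInstance] (I a n) := fun n a =>
    Measurable.of_comap_le
      (le_iSup (fun a => MeasurableSpace.comap (I a n) inferInstance) a)
  have hm1le : ∀ n : ℕ,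
      (⨆ a : Fin 3, MeasurableSpace.comap (I a n) inferInstance) ≤ ‹MeasurableSpace Ω› :=
    fun n => iSup_le fun a => (hmeas a n).comap_le
  have hIndepn : ∀ n : ℕ, Indep
      (⨆ a : Fin 3, MeasurableSpace.comap (I a n) inferInstance)
      (incFiltration I hmeas n) μ := by
    intro n
    have h := ProbabilityTheory.indep_iSup_of_disjoint
      (m := fun p : Fin 3 × ℕ => MeasurableSpace.comap (fun ω => I p.1 p.2 ω) inferInstance)
      (fun p => (hmeas p.1 p.2).comap_le) hindep.iIndep
      (S := {p : Fin 3 × ℕ | p.2 = n}) (T := {p : Fin 3 × ℕ | p.2 < n})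
      (by rw [Set.disjoint_left]; rintro ⟨a, k⟩ (hk : k = n) (hk' : k < n); omega)
    have e1 : (⨆ p ∈ {p : Fin 3 × ℕ | p.2 = n},
        MeasurableSpace.comap (fun ω => I p.1 p.2 ω) inferInstance)
        = ⨆ a : Fin 3, MeasurableSpace.comap (I a n) inferInstance := by
      apply le_antisymm
      · refine iSup₂_le ?_
        rintro ⟨a, k⟩ (hk : k = n)
        subst hk
        exact le_iSup (fun a => MeasurableSpace.comap (I a k) inferInstance) a
      · refine iSup_le fun a => ?_
        exact le_iSup₂ (f := fun (p : Fin 3 × ℕ) (_ : p ∈ {p : Fin 3 × ℕ | p.2 = n}) =>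
          MeasurableSpace.comap (fun ω => I p.1 p.2 ω) inferInstance) (a, n) rfl
    have e2 : (⨆ p ∈ {p : Fin 3 × ℕ | p.2 < n},
        MeasurableSpace.comap (fun ω => I p.1 p.2 ω) inferInstance)
        = incFiltration I hmeas n := by
      apply le_antisymm
      · refine iSup₂_le ?_
        rintro ⟨a, k⟩ (hk : k < n)
        exact hcomap_le a k n hk
      · show (⨆ (a : Fin 3) (k : ℕ) (_ : k < n),
          MeasurableSpace.comap (I a k) inferInstance) ≤ _
        refine iSup_le fun a => iSup_le fun k => iSup_le fun hk => ?_
        exact le_iSup₂ (f := fun (p : Fin 3 × ℕ) (_ : p ∈ {p : Fin 3 × ℕ | p.2 < n}) =>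
          MeasurableSpace.comap (fun ω => I p.1 p.2 ω) inferInstance) (a, k) hk
    rw [e1, e2] at h
    exact h
  -- integrals of products of increments
  have hP : ∀ (n : ℕ) (p q : Fin 3), Integrable (fun ω => I p n ω * I q n ω) μ := by
    intro n p q
    refine integrable_of_ae_bound (C := 1*1)
      (((hmeas p n).mul (hmeas q n)).aestronglyMeasurable) ?_
    filter_upwards [hIbd p n, hIbd q n] with ω h h'
    exact abs_mul_le' h h'
  have hpair : ∀ (n : ℕ) (p q : Fin 3), p ≠ q → ∫ ω, I p n ω * I q n ω ∂μ = 0 := by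
    intro n p q hpq
    have hip : IndepFun (fun ω => I p n ω) (fun ω => I q n ω) μ :=
      hindep.indepFun (i := (p, n)) (j := (q, n)) (fun h => hpq (congrArg Prod.fst h))
    have h2 : ∫ ω, I p n ω * I q n ω ∂μ = (∫ ω, I p n ω ∂μ) * ∫ ω, I q n ω ∂μ :=
      hip.integral_fun_mul_eq_mul_integral (hIint p n).aestronglyMeasurable (hIint q n).aestronglyMeasurable
    rw [h2, hEI p n, hEI q n, mul_zero]
  have hsq : ∀ (n : ℕ) (p : Fin 3), ∫ ω, I p n ω * I p n ω ∂μ = 1 := by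
    intro n p
    have hpt : (fun ω => I p n ω * I p n ω) =ᵐ[μ] fun _ => (1:ℝ) := by
      filter_upwards [hIae p n] with ω h
      rcases h with h | h <;> rw [h] <;> norm_num
    rw [integral_congr_ae hpt, integral_const]
    simp
  have hTint : ∀ n : ℕ, Integrable (fun ω => I 0 n ω * I 1 n ω * I 2 n ω) μ := by
    intro n
    refine integrable_of_ae_bound (C := 1*1*1)
      ((((hmeas 0 n).mul (hmeas 1 n)).mul (hmeas 2 n)).aestronglyMeasurable) ?_
    filter_upwards [hIbd 0 n, hIbd 1 n, hIbd 2 n] with ω h0 h1 h2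
    exact abs_mul_le' (abs_mul_le' h0 h1) h2
  have htrip : ∀ n : ℕ, ∫ ω, I 0 n ω * I 1 n ω * I 2 n ω ∂μ = 0 := by
    intro n
    have hm' : ∀ p : Fin 3 × ℕ, Measurable (fun ω => I p.1 p.2 ω) := fun p => hmeas p.1 p.2
    have h12 : ((0 : Fin 3), n) ≠ ((2 : Fin 3), n) := fun h => by
      have := congrArg Prod.fst h; simp at this
    have h22 : ((1 : Fin 3), n) ≠ ((2 : Fin 3), n) := fun h => by
      have := congrArg Prod.fst h; simp at this
    have h := (hindep.indepFun_mul_left hm' (0, n) (1, n) (2, n) h12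
      h22).integral_mul_eq_mul_integral (by exact (hP n 0 1).aestronglyMeasurable) (hIint 2 n).aestronglyMeasurable
    have h2 : ∫ ω, I 0 n ω * I 1 n ω * I 2 n ω ∂μ
        = (∫ ω, I 0 n ω * I 1 n ω ∂μ) * ∫ ω, I 2 n ω ∂μ := h
    rw [h2, hEI 2 n, mul_zero]
  -- the seven moment computations for a = I1-I0, b = I2-I1
  have hEa : ∀ n : ℕ, ∫ ω, (I 1 n ω - I 0 n ω) ∂μ = 0 := by
    intro n
    rw [integral_sub (hIint 1 n) (hIint 0 n), hEI 1 n, hEI 0 n, sub_zero]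
  have hEb : ∀ n : ℕ, ∫ ω, (I 2 n ω - I 1 n ω) ∂μ = 0 := by
    intro n
    rw [integral_sub (hIint 2 n) (hIint 1 n), hEI 2 n, hEI 1 n, sub_zero]
  have hEab : ∀ n : ℕ, ∫ ω, (I 1 n ω - I 0 n ω) * (I 2 n ω - I 1 n ω) ∂μ = -1 := by
    intro n
    have hpt : (fun ω => (I 1 n ω - I 0 n ω) * (I 2 n ω - I 1 n ω))
        = fun ω => (I 1 n ω * I 2 n ω - I 1 n ω * I 1 n ω)
          - (I 0 n ω * I 2 n ω - I 0 n ω * I 1 n ω) := by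
      funext ω; ring
    have i1 : Integrable (fun ω => I 1 n ω * I 2 n ω - I 1 n ω * I 1 n ω) μ :=
      (hP n 1 2).sub (hP n 1 1)
    have i2 : Integrable (fun ω => I 0 n ω * I 2 n ω - I 0 n ω * I 1 n ω) μ :=
      (hP n 0 2).sub (hP n 0 1)
    rw [hpt, integral_sub i1 i2,
      integral_sub (hP n 1 2) (hP n 1 1), integral_sub (hP n 0 2) (hP n 0 1),
      hpair n 1 2 (by decide), hsq n 1, hpair n 0 2 (by decide), hpair n 0 1 (by decide)]
    norm_num
  have hEaa : ∀ n : ℕ, ∫ ω, (I 1 n ω - I 0 n ω) * (I 1 n ω - I 0 n ω) ∂μ = 2 := by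
    intro n
    have hpt : (fun ω => (I 1 n ω - I 0 n ω) * (I 1 n ω - I 0 n ω)) =ᵐ[μ]
        fun ω => (2 : ℝ) - 2 * (I 0 n ω * I 1 n ω) := by
      filter_upwards [hIae 0 n, hIae 1 n] with ω h0 h1
      rcases h0 with h0 | h0 <;> rcases h1 with h1 | h1 <;> rw [h0, h1] <;> norm_num
    rw [integral_congr_ae hpt, integral_sub (integrable_const _) ((hP n 0 1).const_mul 2),
      integral_const, integral_const_mul, hpair n 0 1 (by decide)]
    simp
  have hEbb : ∀ n : ℕ, ∫ ω, (I 2 n ω - I 1 n ω) * (I 2 n ω - I 1 n ω) ∂μ = 2 := by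
    intro n
    have hpt : (fun ω => (I 2 n ω - I 1 n ω) * (I 2 n ω - I 1 n ω)) =ᵐ[μ]
        fun ω => (2 : ℝ) - 2 * (I 1 n ω * I 2 n ω) := by
      filter_upwards [hIae 1 n, hIae 2 n] with ω h1 h2
      rcases h1 with h1 | h1 <;> rcases h2 with h2 | h2 <;> rw [h1, h2] <;> norm_num
    rw [integral_congr_ae hpt, integral_sub (integrable_const _) ((hP n 1 2).const_mul 2),
      integral_const, integral_const_mul, hpair n 1 2 (by decide)]
    simp
  have hEaab : ∀ n : ℕ,
      ∫ ω, (I 1 n ω - I 0 n ω) * (I 1 n ω - I 0 n ω) * (I 2 n ω - I 1 n ω) ∂μ = 0 := by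
    intro n
    have hpt : (fun ω => (I 1 n ω - I 0 n ω) * (I 1 n ω - I 0 n ω) * (I 2 n ω - I 1 n ω))
        =ᵐ[μ] fun ω => 2 * I 2 n ω - 2 * I 1 n ω
          - 2 * (I 0 n ω * I 1 n ω * I 2 n ω) + 2 * I 0 n ω := by
      filter_upwards [hIae 0 n, hIae 1 n] with ω h0 h1
      rcases h0 with h0 | h0 <;> rcases h1 with h1 | h1 <;> rw [h0, h1] <;> ring
    have e2' : Integrable (fun ω => 2 * I 2 n ω - 2 * I 1 n ω) μ :=
      ((hIint 2 n).const_mul 2).sub ((hIint 1 n).const_mul 2)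
    have e3' : Integrable
        (fun ω => 2 * I 2 n ω - 2 * I 1 n ω - 2 * (I 0 n ω * I 1 n ω * I 2 n ω)) μ :=
      e2'.sub ((hTint n).const_mul 2)
    rw [integral_congr_ae hpt, integral_add e3' ((hIint 0 n).const_mul 2),
      integral_sub e2' ((hTint n).const_mul 2),
      integral_sub ((hIint 2 n).const_mul 2) ((hIint 1 n).const_mul 2),
      integral_const_mul, integral_const_mul, integral_const_mul, integral_const_mul,
      hEI 2 n, hEI 1 n, hEI 0 n, htrip n]
    ring
  have hEabb : ∀ n : ℕ,
      ∫ ω, (I 1 n ω - I 0 n ω) * ((I 2 n ω - I 1 n ω) * (I 2 n ω - I 1 n ω)) ∂μ = 0 := by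
    intro n
    have hpt : (fun ω => (I 1 n ω - I 0 n ω) * ((I 2 n ω - I 1 n ω) * (I 2 n ω - I 1 n ω)))
        =ᵐ[μ] fun ω => 2 * I 1 n ω - 2 * I 2 n ω
          - 2 * I 0 n ω + 2 * (I 0 n ω * I 1 n ω * I 2 n ω) := by
      filter_upwards [hIae 1 n, hIae 2 n] with ω h1 h2
      rcases h1 with h1 | h1 <;> rcases h2 with h2 | h2 <;> rw [h1, h2] <;> ring
    have e2' : Integrable (fun ω => 2 * I 1 n ω - 2 * I 2 n ω) μ :=
      ((hIint 1 n).const_mul 2).sub ((hIint 2 n).const_mul 2)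
    have e3' : Integrable (fun ω => 2 * I 1 n ω - 2 * I 2 n ω - 2 * I 0 n ω) μ :=
      e2'.sub ((hIint 0 n).const_mul 2)
    rw [integral_congr_ae hpt, integral_add e3' ((hTint n).const_mul 2),
      integral_sub e2' ((hIint 0 n).const_mul 2),
      integral_sub ((hIint 1 n).const_mul 2) ((hIint 2 n).const_mul 2),
      integral_const_mul, integral_const_mul, integral_const_mul, integral_const_mul,
      hEI 1 n, hEI 2 n, hEI 0 n, htrip n]
    ring
  -- conclude
  refine martingale_nat (fun n => ?_) (fun n => ?_) (fun n => ?_)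
  · exact (((hXmeasF n).mul (hYmeasF n)).mul ((hXmeasF n).add (hYmeasF n))).stronglyMeasurable
  · refine integrable_of_ae_bound
      (C := (2*(i:ℝ) + 2*n) * (2*(j:ℝ) + 2*n) * ((2*(i:ℝ) + 2*n) + (2*(j:ℝ) + 2*n)))
      ((((hXm n).mul (hYm n)).mul ((hXm n).add (hYm n))).aestronglyMeasurable) ?_
    filter_upwards [hXbd n, hYbd n] with ω hx hy
    exact abs_mul_le' (abs_mul_le' hx hy) ((abs_add_le _ _).trans (add_le_add hx hy))
  · have hrw : (fun ω => distLM i (I 0) (I 1) (n+1) ω * distMR j (I 1) (I 2) (n+1) ω *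
        (distLM i (I 0) (I 1) (n+1) ω + distMR j (I 1) (I 2) (n+1) ω))
        = fun ω => (distLM i (I 0) (I 1) n ω + (I 1 n ω - I 0 n ω)) *
            (distMR j (I 1) (I 2) n ω + (I 2 n ω - I 1 n ω)) *
            ((distLM i (I 0) (I 1) n ω + (I 1 n ω - I 0 n ω)) +
              (distMR j (I 1) (I 2) n ω + (I 2 n ω - I 1 n ω))) := by
      funext ω
      simp only [distLM, distMR, Finset.sum_range_succ]
      ring
    rw [hrw]
    have habd : ∀ᵐ ω ∂μ, |I 1 n ω - I 0 n ω| ≤ 2 := by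
      filter_upwards [hIbd 1 n, hIbd 0 n] with ω h1 h0
      exact habs_sub _ _ h1 h0
    have hbbd : ∀ᵐ ω ∂μ, |I 2 n ω - I 1 n ω| ≤ 2 := by
      filter_upwards [hIbd 2 n, hIbd 1 n] with ω h2 h1
      exact habs_sub _ _ h2 h1
    exact (step_condexp
      (u := fun ω => distLM i (I 0) (I 1) n ω) (v := fun ω => distMR j (I 1) (I 2) n ω)
      (a := fun ω => I 1 n ω - I 0 n ω) (b := fun ω => I 2 n ω - I 1 n ω)
      (P := 2*(i:ℝ) + 2*n) (Q := 2*(j:ℝ) + 2*n)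
      (hm1le n) ((incFiltration I hmeas).le n) (hIndepn n)
      (hXmeasF n).stronglyMeasurable (hYmeasF n).stronglyMeasurable
      ((hm1meas n 1).sub (hm1meas n 0)) ((hm1meas n 2).sub (hm1meas n 1))
      (hXm n) (hYm n) ((hmeas 1 n).sub (hmeas 0 n)) ((hmeas 2 n).sub (hmeas 1 n))
      (hXbd n) (hYbd n) habd hbbd
      (hEa n) (hEb n) (hEab n) (hEaa n) (hEbb n) (hEaab n) (hEabb n)).symm
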